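/- Suppose 0 < ε ≤ 1/9 and 0 < θ ≤ 1/9, and X = (X_k, k ∈ ℤ) is a strictly stationary Markov chain satisfying Condition H(ε,θ). Then for every positive integer n, P(X_0 = 1 and X_n = 1) = (ε/2)(1−θ)^n + P(X_0 = 1 and X_n = −1). -/

import Mathlib

open MeasureTheory ProbabilityTheory Filter Topology

noncomputable section

/-- A sequence `X = (X_k, k ∈ ℤ)` of real random variables is strictly stationary if for
every `n ≥ 1` and `j ∈ ℤ`, `(X_1, …, X_n)` has the same distribution as
`(X_{1+j}, …, X_{n+j})`. -/
def IsStrictlyStationary {Ω : Type*} [MeasurableSpace Ω] (P : Measure Ω)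
    (X : ℤ → Ω → ℝ) : Prop :=
  ∀ (n : ℕ) (j : ℤ),
    Measure.map (fun ω => fun i : Fin n => X (1 + (i : ℤ)) ω) P =
    Measure.map (fun ω => fun i : Fin n => X (1 + j + (i : ℤ)) ω) P

/-- `X` is a Markov chain: for every `n ∈ ℤ` and Borel set `B`,
`P(X_{n+1} ∈ B | σ(X_k, k ≤ n)) = P(X_{n+1} ∈ B | X_n)` almost surely (expressed via
conditional expectations of indicator functions). -/
def IsMarkovChain {Ω : Type*} [MeasurableSpace Ω] (P : Measure Ω)
    (X : ℤ → Ω → ℝ) : Prop :=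
  ∀ (n : ℤ) (B : Set ℝ), MeasurableSet B →
    (P[(fun ω => Set.indicator B (fun _ => (1 : ℝ)) (X (n + 1) ω)) |
        ⨆ k : {k : ℤ // k ≤ n}, MeasurableSpace.comap (X k) inferInstance])
      =ᵐ[P]
    (P[(fun ω => Set.indicator B (fun _ => (1 : ℝ)) (X (n + 1) ω)) |
        MeasurableSpace.comap (X n) inferInstance])

/-- Condition `H(ε,θ)`: `X` is a strictly stationary Markov chain with state space
`{−1,0,1}`, marginal distribution `π^{(ε)}`, and one-step transition probabilities given
by the matrix `ℙ^{(ε,θ)}` (with `θ* := θ/(1−ε)`). Conditional probabilities are expressed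
via `ProbabilityTheory.cond`. -/
def CondH {Ω : Type*} [MeasurableSpace Ω] (P : Measure Ω) (X : ℤ → Ω → ℝ)
    (ε θ : ℝ) : Prop :=
  IsStrictlyStationary P X ∧ IsMarkovChain P X ∧
  (∀ k, Measurable (X k)) ∧
  (∀ k ω, X k ω ∈ ({-1, 0, 1} : Set ℝ)) ∧
  P {ω | X 0 ω = 0} = ENNReal.ofReal (1 - ε) ∧
  P {ω | X 0 ω = -1} = ENNReal.ofReal (ε / 2) ∧
  P {ω | X 0 ω = 1} = ENNReal.ofReal (ε / 2) ∧
  ProbabilityTheory.cond P {ω | X 0 ω = 0} {ω | X 1 ω = 0}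
      = ENNReal.ofReal (1 - (θ / (1 - ε)) * ε) ∧
  ProbabilityTheory.cond P {ω | X 0 ω = 0} {ω | X 1 ω = -1}
      = ENNReal.ofReal ((θ / (1 - ε)) * ε / 2) ∧
  ProbabilityTheory.cond P {ω | X 0 ω = 0} {ω | X 1 ω = 1}
      = ENNReal.ofReal ((θ / (1 - ε)) * ε / 2) ∧
  ProbabilityTheory.cond P {ω | X 0 ω = -1} {ω | X 1 ω = -1}
      = ENNReal.ofReal (1 - θ) ∧
  ProbabilityTheory.cond P {ω | X 0 ω = 1} {ω | X 1 ω = 1}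
      = ENNReal.ofReal (1 - θ) ∧
  ProbabilityTheory.cond P {ω | X 0 ω = -1} {ω | X 1 ω = 0}
      = ENNReal.ofReal θ ∧
  ProbabilityTheory.cond P {ω | X 0 ω = 1} {ω | X 1 ω = 0}
      = ENNReal.ofReal θ ∧
  ProbabilityTheory.cond P {ω | X 0 ω = -1} {ω | X 1 ω = 1} = 0 ∧
  ProbabilityTheory.cond P {ω | X 0 ω = 1} {ω | X 1 ω = -1} = 0

/-!
Write `a_n(t) = P(X_0 = 1, X_n = t)`. Conditioning on `X_n` (Markov property) and shifting
time (stationarity) gives the Chapman–Kolmogorov recursion `a_{n+1}(t) = ∑_s a_n(s) p(s, t)`.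
Since the chain never jumps between `1` and `-1`, stays at `±1` with the same probability
`1 - θ`, and leaves `0` towards `1` and `-1` with the same probability, the contributions of
`a_n(0)` cancel in `a_{n+1}(1) - a_{n+1}(-1) = (1 - θ) (a_n(1) - a_n(-1))`, and
`a_0(1) - a_0(-1) = P(X_0 = 1) = ε / 2`.
-/

section

variable {Ω : Type*} {mΩ : MeasurableSpace Ω} {P : Measure Ω} {X : ℤ → Ω → ℝ}

abbrev pastMeasurableSpace (X : ℤ → Ω → ℝ) (n : ℤ) : MeasurableSpace Ω :=
  ⨆ k : {k : ℤ // k ≤ n}, MeasurableSpace.comap (X k) inferInstance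

lemma pastMeasurableSpace_le (hm : ∀ k, Measurable (X k)) (n : ℤ) :
    pastMeasurableSpace X n ≤ mΩ :=
  iSup_le fun k => (hm k).comap_le

lemma measurableSet_pastMeasurableSpace {j n : ℤ} (hjn : j ≤ n) {B : Set ℝ}
    (hB : MeasurableSet B) : MeasurableSet[pastMeasurableSpace X n] (X j ⁻¹' B) :=
  le_iSup (fun k : {k : ℤ // k ≤ n} => MeasurableSpace.comap (X k) inferInstance) ⟨j, hjn⟩ _
    ⟨B, hB, rfl⟩

lemma IsStrictlyStationary.measure_preimage_shift (hst : IsStrictlyStationary P X)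
    (hm : ∀ k, Measurable (X k)) (n : ℕ) (j k : ℤ) {S : Set (Fin n → ℝ)}
    (hS : MeasurableSet S) :
    P ((fun ω (i : Fin n) => X (j + i) ω) ⁻¹' S) = P ((fun ω (i : Fin n) => X (k + i) ω) ⁻¹' S) := by
  have hmap : ∀ j : ℤ, P.map (fun ω (i : Fin n) => X (j + i) ω) =
      P.map (fun ω (i : Fin n) => X (1 + i) ω) := by
    intro j
    simpa only [add_sub_cancel] using (hst n (j - 1)).symm
  have hmeas : ∀ j : ℤ, Measurable fun ω (i : Fin n) => X (j + i) ω :=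
    fun j => measurable_pi_lambda _ fun i => hm _
  rw [← Measure.map_apply (hmeas j) hS, ← Measure.map_apply (hmeas k) hS, hmap j, hmap k]

lemma IsStrictlyStationary.cond_shift (hst : IsStrictlyStationary P X)
    (hm : ∀ k, Measurable (X k)) (k : ℤ) (s t : ℝ) :
    cond P (X k ⁻¹' {s}) (X (k + 1) ⁻¹' {t}) = cond P (X 0 ⁻¹' {s}) (X 1 ⁻¹' {t}) := by
  have hfirst : ∀ k : ℤ,
      X k ⁻¹' {s} = (fun ω (i : Fin 2) => X (k + i) ω) ⁻¹' {f | f 0 = s} := by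
    intro k; ext ω; simp
  have hpair : ∀ k : ℤ, X k ⁻¹' {s} ∩ X (k + 1) ⁻¹' {t} =
      (fun ω (i : Fin 2) => X (k + i) ω) ⁻¹' {f | f 0 = s ∧ f 1 = t} := by
    intro k; ext ω; simp
  have hmeas_coord : ∀ (i : Fin 2) (r : ℝ), MeasurableSet {f : Fin 2 → ℝ | f i = r} :=
    fun i r => show MeasurableSet ((fun f : Fin 2 → ℝ => f i) ⁻¹' {r}) from
      measurable_pi_apply i (measurableSet_singleton r)
  have hmeas_pair : MeasurableSet {f : Fin 2 → ℝ | f 0 = s ∧ f 1 = t} :=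
    (hmeas_coord 0 s).inter (hmeas_coord 1 t)
  rw [cond_apply (hm k (measurableSet_singleton s)), cond_apply (hm 0 (measurableSet_singleton s)),
    hpair, hfirst, hst.measure_preimage_shift hm 2 k 0 hmeas_pair,
    hst.measure_preimage_shift hm 2 k 0 (hmeas_coord 0 s), ← hfirst, ← hpair, zero_add]

section Markov

variable [IsFiniteMeasure P]

lemma IsMarkovChain.measure_inter_mul_eq (hmc : IsMarkovChain P X)
    (hm : ∀ k, Measurable (X k)) {n : ℤ} {A : Set Ω}
    (hA : MeasurableSet[pastMeasurableSpace X n] A) (s : ℝ) {C : Set ℝ} (hC : MeasurableSet C) :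
    P (A ∩ X n ⁻¹' {s} ∩ X (n + 1) ⁻¹' C) * P (X n ⁻¹' {s}) =
      P (A ∩ X n ⁻¹' {s}) * P (X n ⁻¹' {s} ∩ X (n + 1) ⁻¹' C) := by
  set E := X n ⁻¹' {s}
  set T := X (n + 1) ⁻¹' C
  rcases Set.eq_empty_or_nonempty E with hE | ⟨ω₀, hω₀⟩
  · simp [hE]
  set f : Ω → ℝ := fun ω => C.indicator (fun _ => (1 : ℝ)) (X (n + 1) ω)
  have hf : f = T.indicator 1 := rfl
  have hT : MeasurableSet T := hm _ hC
  have hf_int : Integrable f P := by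
    rw [hf]; exact (integrable_const (1 : ℝ)).indicator hT
  set g := P[f | MeasurableSpace.comap (X n) inferInstance]
  -- `g` is `σ(X_n)`-measurable, hence constant on the fibre `E` of `X_n`.
  have hg_const : ∀ ω ∈ E, g ω = g ω₀ := fun ω hω =>
    stronglyMeasurable_condExp.measurable.factorsThrough (hω.trans hω₀.symm)
  have hE_past : MeasurableSet[pastMeasurableSpace X n] E :=
    measurableSet_pastMeasurableSpace le_rfl (measurableSet_singleton s)
  have key : ∀ B, MeasurableSet[pastMeasurableSpace X n] B →
      P.real (B ∩ E ∩ T) = P.real (B ∩ E) * g ω₀ := by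
    intro B hB
    have hBE := hB.inter hE_past
    calc P.real (B ∩ E ∩ T) = ∫ ω in B ∩ E, f ω ∂P := by
          rw [hf, setIntegral_indicator hT]
          simp only [Pi.one_apply, setIntegral_const, smul_eq_mul, mul_one]
      _ = ∫ ω in B ∩ E, (P[f | pastMeasurableSpace X n]) ω ∂P :=
          (setIntegral_condExp (pastMeasurableSpace_le hm n) hf_int hBE).symm
      _ = ∫ ω in B ∩ E, g ω ∂P := integral_congr_ae (ae_restrict_of_ae (hmc n C hC))
      _ = ∫ _ in B ∩ E, g ω₀ ∂P :=
          setIntegral_congr_fun (pastMeasurableSpace_le hm n _ hBE) fun ω hω => hg_const ω hω.2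
      _ = P.real (B ∩ E) * g ω₀ := by rw [setIntegral_const, smul_eq_mul]
  have hA_real := key A hA
  have hE_real := key E hE_past
  simp only [Set.inter_self] at hE_real
  rw [← ENNReal.toReal_eq_toReal_iff' (by finiteness) (by finiteness)]
  simp only [ENNReal.toReal_mul, ← measureReal_def, hA_real, hE_real]
  ring

lemma IsMarkovChain.measure_inter_eq_mul_cond (hmc : IsMarkovChain P X)
    (hm : ∀ k, Measurable (X k)) {n : ℤ} {A : Set Ω}
    (hA : MeasurableSet[pastMeasurableSpace X n] A) (s : ℝ) {C : Set ℝ} (hC : MeasurableSet C) :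
    P (A ∩ X n ⁻¹' {s} ∩ X (n + 1) ⁻¹' C) =
      P (A ∩ X n ⁻¹' {s}) * cond P (X n ⁻¹' {s}) (X (n + 1) ⁻¹' C) := by
  by_cases hE : P (X n ⁻¹' {s}) = 0
  · have hAE : P (A ∩ X n ⁻¹' {s}) = 0 := measure_mono_null Set.inter_subset_right hE
    rw [hAE, zero_mul, measure_mono_null Set.inter_subset_left hAE]
  rw [cond_apply (hm n (measurableSet_singleton s)), ← ENNReal.mul_left_inj hE (by finiteness),
    hmc.measure_inter_mul_eq hm hA s hC]
  rw [mul_assoc, mul_right_comm _ _ (P _), ENNReal.inv_mul_cancel hE (by finiteness), one_mul]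

lemma IsMarkovChain.measure_inter_succ_eq_sum (hmc : IsMarkovChain P X)
    (hst : IsStrictlyStationary P X) (hm : ∀ k, Measurable (X k)) {n : ℤ} {S : Finset ℝ}
    (hS : ∀ ω, X n ω ∈ S) {A : Set Ω} (hA : MeasurableSet[pastMeasurableSpace X n] A) (t : ℝ) :
    P (A ∩ {ω | X (n + 1) ω = t}) =
      ∑ s ∈ S, P (A ∩ {ω | X n ω = s}) * cond P {ω | X 0 ω = s} {ω | X 1 ω = t} := by
  have hfiber : ∀ s, MeasurableSet (X n ⁻¹' {s}) := fun s => hm n (measurableSet_singleton s)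
  have hcover : X n ⁻¹' S = Set.univ := Set.eq_univ_of_forall hS
  calc P (A ∩ {ω | X (n + 1) ω = t})
      = ∑ s ∈ S, P.restrict (A ∩ {ω | X (n + 1) ω = t}) (X n ⁻¹' {s}) := by
        rw [sum_measure_preimage_singleton S fun s _ => hfiber s, hcover,
          Measure.restrict_apply_univ]
    _ = ∑ s ∈ S, P (A ∩ X n ⁻¹' {s} ∩ X (n + 1) ⁻¹' {t}) := by
        refine Finset.sum_congr rfl fun s _ => ?_
        rw [Measure.restrict_apply (hfiber s), Set.inter_left_comm, ← Set.inter_assoc]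
        rfl
    _ = ∑ s ∈ S, P (A ∩ {ω | X n ω = s}) * cond P {ω | X 0 ω = s} {ω | X 1 ω = t} := by
        refine Finset.sum_congr rfl fun s _ => ?_
        rw [hmc.measure_inter_eq_mul_cond hm hA s (measurableSet_singleton t), hst.cond_shift hm]
        rfl

end Markov

lemma measure_eq_mul_pow_add_of_symmetric [IsFiniteMeasure P] (hmc : IsMarkovChain P X)
    (hst : IsStrictlyStationary P X) (hm : ∀ k, Measurable (X k))
    (hr : ∀ k ω, X k ω ∈ ({-1, 0, 1} : Set ℝ))
    (h_stay : cond P {ω | X 0 ω = -1} {ω | X 1 ω = -1} = cond P {ω | X 0 ω = 1} {ω | X 1 ω = 1})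
    (h_enter : cond P {ω | X 0 ω = 0} {ω | X 1 ω = -1} = cond P {ω | X 0 ω = 0} {ω | X 1 ω = 1})
    (h_up : cond P {ω | X 0 ω = -1} {ω | X 1 ω = 1} = 0)
    (h_down : cond P {ω | X 0 ω = 1} {ω | X 1 ω = -1} = 0) (n : ℕ) :
    P {ω | X 0 ω = 1 ∧ X n ω = 1} =
      P {ω | X 0 ω = 1} * cond P {ω | X 0 ω = 1} {ω | X 1 ω = 1} ^ n +
        P {ω | X 0 ω = 1 ∧ X n ω = -1} := by
  induction n with
  | zero =>
    have h_disj : {ω | X 0 ω = 1 ∧ X 0 ω = -1} = ∅ :=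
      Set.eq_empty_of_forall_notMem fun ω h => by linarith [h.1, h.2]
    simp [h_disj]
  | succ n ih =>
    have hS : ∀ ω, X n ω ∈ ({-1, 0, 1} : Finset ℝ) := fun ω => by simpa using hr n ω
    have hA : MeasurableSet[pastMeasurableSpace X n] {ω | X 0 ω = 1} :=
      measurableSet_pastMeasurableSpace (Int.natCast_nonneg n) (measurableSet_singleton 1)
    have hstep := fun t => hmc.measure_inter_succ_eq_sum hst hm hS hA t
    simp only [Finset.sum_insert (show (-1 : ℝ) ∉ ({0, 1} : Finset ℝ) by norm_num),
      Finset.sum_pair (show (0 : ℝ) ≠ 1 by norm_num)] at hstep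
    push_cast
    simp only [Set.ofPred_and] at ih ⊢
    rw [hstep 1, hstep (-1), h_stay, h_enter, h_up, h_down, ih]
    ring

end

/-- Lemma 5.3(7) of the paper: under Condition `H(ε,θ)`, for every `n ≥ 1`,
`P(X_0 = 1, X_n = 1) = (ε/2)(1−θ)^n + P(X_0 = 1, X_n = −1)`. -/
theorem stmt8 {Ω : Type*} [MeasurableSpace Ω] (P : Measure Ω) [IsProbabilityMeasure P]
    (ε θ : ℝ) (hε : 0 < ε ∧ ε ≤ 1 / 9) (hθ : 0 < θ ∧ θ ≤ 1 / 9)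
    (X : ℤ → Ω → ℝ) (hX : CondH P X ε θ) :
    ∀ n : ℕ, 0 < n →
      P {ω | X 0 ω = 1 ∧ X (n : ℤ) ω = 1} =
        ENNReal.ofReal ((ε / 2) * (1 - θ) ^ n) +
          P {ω | X 0 ω = 1 ∧ X (n : ℤ) ω = -1} := by
  obtain ⟨hst, hmc, hm, hr, -, -, hP1, -, c0n, c01, cnn, c11, -, -, cn1, c1n⟩ := hX
  intro n _
  have h := measure_eq_mul_pow_add_of_symmetric hmc hst hm hr (cnn.trans c11.symm)
    (c0n.trans c01.symm) cn1 c1n n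
  rwa [hP1, c11, ← ENNReal.ofReal_pow (by linarith), ← ENNReal.ofReal_mul (by linarith)] at h
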